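/- arXiv:2304.12807 — 5 statements merged into one kernel-verified Lean document; each statement's English description precedes it below -/
import Mathlib

section
/- For every prime p, the directed cycle C_p = (Z/p; {(i,i+1) : i ∈ Z/p}) has no polymorphism c of arity p satisfying the cyclic identity c(x_1,...,x_p) = c(x_2,...,x_p,x_1). That is, there is no function c : (Z/p)^p → Z/p which preserves the successor relation and is invariant under cyclic shifts of its arguments. -/
/-! Applied to the tuple `(0, 1, …, p - 1)`, the successor relation and the cyclic shift produce
the same tuple `(1, 2, …, 0)`, so `c` would have to satisfy `c x + 1 = c x`. -/

theorem Function.isFixedPt_of_comp_invariant {α : Type*} (σ : α → α) (c : (α → α) → α)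
    (hpost : ∀ x, c (σ ∘ x) = σ (c x)) (hpre : ∀ x, c (x ∘ σ) = c x) :
    Function.IsFixedPt σ (c id) :=
  (hpost id).symm.trans (hpre id)

/-- For every prime `p`, the directed cycle `C_p = (ℤ/p; {(i,i+1)})` has no
polymorphism of arity `p` satisfying the cyclic identity. -/
theorem no_cyclic_polymorphism_of_cycle (p : ℕ) (hp : p.Prime) :
    ¬ ∃ c : (ZMod p → ZMod p) → ZMod p,
      (∀ a b : ZMod p → ZMod p, (∀ j, b j = a j + 1) → c b = c a + 1) ∧
      (∀ x : ZMod p → ZMod p, c (fun i => x (i + 1)) = c x) := by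
  rintro ⟨c, hsucc, hcyc⟩
  have : Fact (1 < p) := ⟨hp.one_lt⟩
  have hfix : c id + 1 = c id :=
    Function.isFixedPt_of_comp_invariant (· + 1) c (fun x => hsucc x _ fun _ => rfl) hcyc
  exact one_ne_zero (add_eq_left.mp hfix)
end

section
/- Let A be a finite set, M' : A^3 → A a majority operation, c_2 : A^2 → A a binary operation satisfying c_2(x,y) = c_2(y,x), and c_3 : A^3 → A satisfying c_3(x,y,z) = c_3(y,z,x), all idempotent. Then M(x,y,z) := c_2(c_3(M'(x,y,z), M'(y,z,x), M'(z,x,y)), c_3(M'(x,z,y), M'(z,y,x), M'(y,x,z))) is a majority operation that is fully symmetric: M(x,y,z) is invariant under all permutations of its arguments. -/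
/-!
Idempotence of `c₂` and `c₃` together with the majority law of `M'` make every inner value
collapse to `x` on inputs `(x, x, y)`. A cyclic shift of the arguments permutes the three
`M'`-terms inside each `c₃` cyclically, and a transposition of the last two arguments swaps the
two `c₃`-blocks; these two permutations generate `S₃`.
-/

section Ternary

variable {A : Type*}

def IsMajority (f : A → A → A → A) : Prop :=
  ∀ x y : A, f x x y = x ∧ f x y x = x ∧ f y x x = x

def IsFullySymmetric (f : A → A → A → A) : Prop :=
  ∀ x y z : A, f x y z = f x z y ∧ f x y z = f y x z ∧ f x y z = f y z x ∧
    f x y z = f z x y ∧ f x y z = f z y x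

theorem isFullySymmetric_of_swap_of_rotate {f : A → A → A → A}
    (swap : ∀ x y z, f x z y = f x y z) (rotate : ∀ x y z, f y z x = f x y z) :
    IsFullySymmetric f := fun x y z =>
  ⟨(swap x y z).symm,
    by rw [rotate z y x, rotate x z y, swap],
    (rotate x y z).symm,
    rotate z x y,
    by rw [rotate x z y, swap]⟩

theorem IsFullySymmetric.isMajority {f : A → A → A → A} (hf : IsFullySymmetric f)
    (h : ∀ x y, f x x y = x) : IsMajority f := fun x y =>
  ⟨h x y, by rw [← (hf x x y).1, h], by rw [← (hf x x y).2.2.2.1, h]⟩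

end Ternary

section Symmetrize

variable {A : Type*} (M' : A → A → A → A) (c₂ : A → A → A) (c₃ : A → A → A → A)

def symmetrize (x y z : A) : A :=
  c₂ (c₃ (M' x y z) (M' y z x) (M' z x y)) (c₃ (M' x z y) (M' z y x) (M' y x z))

theorem symmetrize_swap (hc₂ : ∀ x y : A, c₂ x y = c₂ y x) (x y z : A) :
    symmetrize M' c₂ c₃ x z y = symmetrize M' c₂ c₃ x y z :=
  hc₂ _ _

theorem symmetrize_rotate (hc₃ : ∀ x y z : A, c₃ x y z = c₃ y z x) (x y z : A) :
    symmetrize M' c₂ c₃ y z x = symmetrize M' c₂ c₃ x y z := by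
  rw [symmetrize, symmetrize, hc₃ (M' x y z), hc₃ (M' x z y), hc₃ (M' z y x)]

theorem symmetrize_self_self (hM' : IsMajority M') (hc₂id : ∀ x : A, c₂ x x = x)
    (hc₃id : ∀ x : A, c₃ x x x = x) (x y : A) : symmetrize M' c₂ c₃ x x y = x := by
  obtain ⟨hxxy, hxyx, hyxx⟩ := hM' x y
  rw [symmetrize, hxxy, hxyx, hyxx, hc₃id, hc₂id]

end Symmetrize

theorem symmetric_majority_general (A : Type*)
    (M' : A → A → A → A) (c₂ : A → A → A) (c₃ : A → A → A → A)
    (hM' : ∀ x y : A, M' x x y = x ∧ M' x y x = x ∧ M' y x x = x)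
    (hc₂ : ∀ x y : A, c₂ x y = c₂ y x) (hc₂id : ∀ x : A, c₂ x x = x)
    (hc₃ : ∀ x y z : A, c₃ x y z = c₃ y z x) (hc₃id : ∀ x : A, c₃ x x x = x)
    (M : A → A → A → A)
    (hMdef : ∀ x y z : A, M x y z =
      c₂ (c₃ (M' x y z) (M' y z x) (M' z x y)) (c₃ (M' x z y) (M' z y x) (M' y x z))) :
    (∀ x y : A, M x x y = x ∧ M x y x = x ∧ M y x x = x) ∧
    (∀ x y z : A, M x y z = M x z y ∧ M x y z = M y x z ∧ M x y z = M y z x ∧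
      M x y z = M z x y ∧ M x y z = M z y x) := by
  obtain rfl : M = symmetrize M' c₂ c₃ := funext₃ hMdef
  have hsymm : IsFullySymmetric (symmetrize M' c₂ c₃) :=
    isFullySymmetric_of_swap_of_rotate (symmetrize_swap M' c₂ c₃ hc₂)
      (symmetrize_rotate M' c₂ c₃ hc₃)
  exact ⟨hsymm.isMajority (symmetrize_self_self M' c₂ c₃ hM' hc₂id hc₃id), hsymm⟩

/-- From an idempotent majority operation `M'`, a binary commutative idempotent `c₂`
and a ternary cyclic idempotent `c₃`, the operation
`M(x,y,z) := c₂(c₃(M'(x,y,z),M'(y,z,x),M'(z,x,y)), c₃(M'(x,z,y),M'(z,y,x),M'(y,x,z)))`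
is a fully symmetric majority operation. -/
theorem symmetric_majority (A : Type*) [Finite A]
    (M' : A → A → A → A) (c₂ : A → A → A) (c₃ : A → A → A → A)
    (hM' : ∀ x y : A, M' x x y = x ∧ M' x y x = x ∧ M' y x x = x)
    (hc₂ : ∀ x y : A, c₂ x y = c₂ y x) (hc₂id : ∀ x : A, c₂ x x = x)
    (hc₃ : ∀ x y z : A, c₃ x y z = c₃ y z x) (hc₃id : ∀ x : A, c₃ x x x = x)
    (M : A → A → A → A)
    (hMdef : ∀ x y z : A, M x y z =
      c₂ (c₃ (M' x y z) (M' y z x) (M' z x y)) (c₃ (M' x z y) (M' z y x) (M' y x z))) :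
    (∀ x y : A, M x x y = x ∧ M x y x = x ∧ M y x x = x) ∧
    (∀ x y z : A, M x y z = M x z y ∧ M x y z = M y x z ∧ M x y z = M y z x ∧
      M x y z = M z x y ∧ M x y z = M z y x) :=
  symmetric_majority_general A M' c₂ c₃ hM' hc₂ hc₂id hc₃ hc₃id M hMdef
end

section
/- Let A be a finite set, m a symmetric minority-type idempotent ternary operation, M a symmetric majority operation on A, and define for n ≥ 3 the operation s_n(x_1,...,x_n) := m(s_{n-1}(x_1, M(x_1,x_2,x_3), x_4,...,x_n), s_{n-1}(x_2, M(x_1,x_2,x_3), x_4,...,x_n), s_{n-1}(x_3, M(x_1,x_2,x_3), x_4,...,x_n)). Then s_n(x,x,x_3,x_4,...,x_n) = s_{n-1}(x_3,x,x_4,...,x_n) for all inputs, and s_n is invariant under all permutations of its first three arguments. -/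
theorem sn_symmetries_general (A : Type*)
    (m M : A → A → A → A)
    (hmsym : ∀ x y z : A, m x y z = m y x z ∧ m x y z = m x z y)
    (hm : ∀ x y : A, m x x y = y)
    (hMsym : ∀ x y z : A, M x y z = M y x z ∧ M x y z = M x z y)
    (hM : ∀ x y : A, M x x y = x)
    (k : ℕ) (s' : A → A → (Fin k → A) → A)
    (sn : A → A → A → (Fin k → A) → A)
    (hsn : ∀ x₁ x₂ x₃ r, sn x₁ x₂ x₃ r =
      m (s' x₁ (M x₁ x₂ x₃) r) (s' x₂ (M x₁ x₂ x₃) r) (s' x₃ (M x₁ x₂ x₃) r)) :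
    (∀ x x₃ r, sn x x x₃ r = s' x₃ x r) ∧
    (∀ x₁ x₂ x₃ r, sn x₁ x₂ x₃ r = sn x₂ x₁ x₃ r ∧ sn x₁ x₂ x₃ r = sn x₁ x₃ x₂ r) := by
  refine ⟨fun x x₃ r => ?_, fun x₁ x₂ x₃ r => ⟨?_, ?_⟩⟩
  · rw [hsn, hM, hm]
  · rw [hsn, hsn, (hMsym x₁ x₂ x₃).1, (hmsym _ _ _).1]
  · rw [hsn, hsn, (hMsym x₁ x₂ x₃).2, (hmsym _ _ _).2]

/-- If `sₙ(x₁,x₂,x₃,r) := m(s'(x₁,M(x₁,x₂,x₃),r), s'(x₂,M(x₁,x₂,x₃),r), s'(x₃,M(x₁,x₂,x₃),r))`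
where `m` is a symmetric minority-type idempotent operation and `M` a symmetric majority,
then `sₙ(x,x,x₃,r) = s'(x₃,x,r)` and `sₙ` is invariant under permutations of its first
three arguments, for any choice of the previous operation `s'`. -/
theorem sn_symmetries (A : Type*) [Finite A]
    (m M : A → A → A → A)
    (hmsym : ∀ x y z : A, m x y z = m y x z ∧ m x y z = m x z y)
    (hm : ∀ x y : A, m x x y = y)
    (hMsym : ∀ x y z : A, M x y z = M y x z ∧ M x y z = M x z y)
    (hM : ∀ x y : A, M x x y = x)
    (k : ℕ) (s' : A → A → (Fin k → A) → A)
    (sn : A → A → A → (Fin k → A) → A)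
    (hsn : ∀ x₁ x₂ x₃ r, sn x₁ x₂ x₃ r =
      m (s' x₁ (M x₁ x₂ x₃) r) (s' x₂ (M x₁ x₂ x₃) r) (s' x₃ (M x₁ x₂ x₃) r)) :
    (∀ x x₃ r, sn x x x₃ r = s' x₃ x r) ∧
    (∀ x₁ x₂ x₃ r, sn x₁ x₂ x₃ r = sn x₂ x₁ x₃ r ∧ sn x₁ x₂ x₃ r = sn x₁ x₃ x₂ r) :=
  sn_symmetries_general A m M hmsym hm hMsym hM k s' sn hsn
end

section
/- On E_3 = {0,1,2}, suppose s_n : E_3^n → E_3 (for each n ≥ 2) are totally symmetric idempotent operations: s_n depends only on the set of values of its arguments. Suppose m is a symmetric minority with constant c. If s_n are defined recursively via a symmetric majority M^c with constant c as s_n(x_1,...,x_n) := m(s_{n-1}(x_1, M^c(x_1,x_2,x_3), x_4,...,x_n), s_{n-1}(x_2, M^c(x_1,x_2,x_3), x_4,...,x_n), s_{n-1}(x_3, M^c(x_1,x_2,x_3), x_4,...,x_n)), then by induction: (i) if the set of arguments {x_1,...,x_n} equals a two-element set {a,b}, then s_n(x_1,...,x_n) = s_2(a,b); (ii) if {x_1,...,x_n}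 = {0,1,2}, then s_n(x_1,...,x_n) = m(s_2(0,c), s_2(1,c), s_2(2,c)). In particular each s_n is totally symmetric. -/
/-- The tuple `(a, M(x₀,x₁,x₂), x₄, …, xₙ)` obtained from `x` in the recursive
definition of the totally symmetric operations `sₙ`. -/
def shiftTuple {k : ℕ} (M : ZMod 3 → ZMod 3 → ZMod 3 → ZMod 3)
    (x : Fin (k + 3) → ZMod 3) (a : ZMod 3) : Fin (k + 2) → ZMod 3 :=
  fun i =>
    if (i : ℕ) = 0 then a
    else if (i : ℕ) = 1 then M (x 0) (x 1) (x 2)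
    else x ⟨(i : ℕ) + 1, by omega⟩

/-!
By induction on the arity, `s k x` depends only on the value set `T` of `x`: it is `s₂(a, b)` when
`T = {a, b}` and `top = m (s₂(0,c)) (s₂(1,c)) (s₂(2,c))` when `T = {0, 1, 2}`. In the recursion step
the three shifted tuples have value sets `{xᵢ, M(x₀,x₁,x₂)} ∪ R`, where `R` holds the values beyond
the third place. If two of `x₀, x₁, x₂` coincide, the majority is the repeated value: two shifted
tuples share a value set and the third has the value set of `x`, which the minority returns. If they
are pairwise distinct, the majority is `c` and `x` takes all three values; according as `R ∪ {c}`
has one, two or three elements, the minority is taken of `s₂(xᵢ, c)`, of two equal values and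
`top`, or of three copies of `top`, and it is `top` each time.
-/

open Finset

theorem Finset.pair_eq_pair_iff {α : Type*} [DecidableEq α] {a b c d : α} :
    ({a, b} : Finset α) = {c, d} ↔ a = c ∧ b = d ∨ a = d ∧ b = c := by
  rw [← coe_inj, coe_pair, coe_pair]
  exact Set.pair_eq_pair_iff

theorem image_eq_insert_insert_insert {α : Type*} [DecidableEq α] {k : ℕ} (x : Fin (k + 3) → α) :
    univ.image x = insert (x 0) (insert (x 1) (insert (x 2)
      (univ.image fun j : Fin k => x j.succ.succ.succ))) := by
  ext v
  simp [Fin.exists_fin_succ, eq_comm]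

theorem image_shiftTuple {k : ℕ} (M : ZMod 3 → ZMod 3 → ZMod 3 → ZMod 3)
    (x : Fin (k + 3) → ZMod 3) (a : ZMod 3) :
    univ.image (shiftTuple M x a) = insert a (insert (M (x 0) (x 1) (x 2))
      (univ.image fun j : Fin k => x j.succ.succ.succ)) := by
  ext v
  simp [Fin.exists_fin_succ, shiftTuple, eq_comm]
  rfl

theorem minority_insert_majority_of_not_pairwise_ne {α β : Type*} [DecidableEq α] {m : β → β → β → β} {M : α → α → α → α}
    (hm : ∀ x y z, m x y z = m y x z ∧ m x y z = m x z y) (hmin : ∀ x y, m x x y = y)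
    (hM : ∀ x y z, M x y z = M y x z ∧ M x y z = M x z y) (hmaj : ∀ x y, M x x y = x)
    (F : Finset α → β) (R : Finset α) {a₀ a₁ a₂ : α} (h : a₀ = a₁ ∨ a₁ = a₂ ∨ a₀ = a₂) :
    m (F (insert a₀ (insert (M a₀ a₁ a₂) R))) (F (insert a₁ (insert (M a₀ a₁ a₂) R)))
        (F (insert a₂ (insert (M a₀ a₁ a₂) R))) =
      F (insert a₀ (insert a₁ (insert a₂ R))) := by
  have hm₁₂ x y z := (hm x y z).1
  have hm₂₃ x y z := (hm x y z).2
  have hM₁₂ x y z := (hM x y z).1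
  have hM₂₃ x y z := (hM x y z).2
  rcases h with rfl | rfl | rfl
  · simp [hmaj, insert_comm a₂, hmin]
  · rw [hM₁₂, hM₂₃, hmaj, hm₁₂, hm₂₃, hmin]
    simp
  · rw [hM₂₃, hmaj, hm₂₃, hmin]
    simp [insert_comm a₁]

theorem ZMod.three_cases : ∀ a : ZMod 3, a = 0 ∨ a = 1 ∨ a = 2 := by
  decide

theorem ZMod.exists_ne_and_ne : ∀ a b : ZMod 3, ∃ e, e ≠ a ∧ e ≠ b := by
  decide

theorem ZMod.eq_univ_of_pairwise_ne_mem {T : Finset (ZMod 3)} {a₀ a₁ a₂ : ZMod 3}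
    (h₀₁ : a₀ ≠ a₁) (h₁₂ : a₁ ≠ a₂) (h₀₂ : a₀ ≠ a₂) (h₀ : a₀ ∈ T) (h₁ : a₁ ∈ T) (h₂ : a₂ ∈ T) :
    T = univ := by
  rw [← univ_subset_iff, ← eq_univ_of_card {a₀, a₁, a₂}
    (card_eq_three.mpr ⟨a₀, a₁, a₂, h₀₁, h₀₂, h₁₂, rfl⟩)]
  simp [insert_subset_iff, h₀, h₁, h₂]

theorem ZMod.pair_ne_univ (a b : ZMod 3) : ({a, b} : Finset (ZMod 3)) ≠ univ := by
  intro h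
  have := h ▸ card_le_two (a := a) (b := b)
  simp at this

theorem ZMod.eq_singleton_or_pair_or_univ :
    ∀ (c : ZMod 3) (T : Finset (ZMod 3)), c ∈ T → T = {c} ∨ (∃ d ≠ c, T = {c, d}) ∨ T = univ := by
  decide

theorem comp_perm_of_pairwise_ne {β : Type*} {f : β → β → β → β}
    (hf : ∀ x y z, f x y z = f y x z ∧ f x y z = f x z y) (h : ZMod 3 → β) {a₀ a₁ a₂ : ZMod 3}
    (h₀₁ : a₀ ≠ a₁) (h₁₂ : a₁ ≠ a₂) (h₀₂ : a₀ ≠ a₂) :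
    f (h a₀) (h a₁) (h a₂) = f (h 0) (h 1) (h 2) := by
  have hf₁₂ x y z := (hf x y z).1
  have hf₂₃ x y z := (hf x y z).2
  rcases ZMod.three_cases a₀ with rfl | rfl | rfl <;>
    rcases ZMod.three_cases a₁ with rfl | rfl | rfl <;>
    rcases ZMod.three_cases a₂ with rfl | rfl | rfl <;>
    first | contradiction | simp only [hf₁₂, hf₂₃]

section SetValue

variable {α : Type*} [DecidableEq α]

-- For `T = {a, b}` this is `g a b`; every other `T` gets `top`, which over `ZMod 3` means
-- `T = univ` (the junk case `T = ∅` never arises as a value set).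
open Classical in
noncomputable def setValue (g : α → α → α) (top : α) (T : Finset α) : α :=
  if h : ∃ a b, T = {a, b} then g h.choose h.choose_spec.choose else top

theorem setValue_pair {g : α → α → α} (hg : ∀ a b, g a b = g b a) (top a b : α) :
    setValue g top {a, b} = g a b := by
  have h : ∃ a' b', ({a, b} : Finset α) = {a', b'} := ⟨a, b, rfl⟩
  rw [setValue, dif_pos h]
  rcases pair_eq_pair_iff.mp h.choose_spec.choose_spec with ⟨ha, hb⟩ | ⟨ha, hb⟩
  · exact congrArg₂ g ha.symm hb.symm
  · exact (congrArg₂ g hb.symm ha.symm).trans (hg b a)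

theorem setValue_of_forall_ne_pair {T : Finset α} (hT : ∀ a b, T ≠ {a, b}) (g : α → α → α) (top : α) :
    setValue g top T = top := by
  rw [setValue, dif_neg (by simpa using hT)]

end SetValue

theorem setValue_univ (g : ZMod 3 → ZMod 3 → ZMod 3) (top : ZMod 3) :
    setValue g top univ = top :=
  setValue_of_forall_ne_pair (fun a b => (ZMod.pair_ne_univ a b).symm) g top

theorem minority_setValue_insert {m : ZMod 3 → ZMod 3 → ZMod 3 → ZMod 3}
    (hm : ∀ x y z, m x y z = m y x z ∧ m x y z = m x z y) (hmin : ∀ x y, m x x y = y)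
    {g : ZMod 3 → ZMod 3 → ZMod 3} (hg : ∀ a b, g a b = g b a) {c top : ZMod 3}
    (htop : m (g 0 c) (g 1 c) (g 2 c) = top) {T : Finset (ZMod 3)} (hc : c ∈ T) :
    m (setValue g top (insert 0 T)) (setValue g top (insert 1 T)) (setValue g top (insert 2 T)) =
      top := by
  rcases ZMod.eq_singleton_or_pair_or_univ c T hc with rfl | ⟨d, hdc, rfl⟩ | rfl
  · simpa only [setValue_pair hg] using htop
  · obtain ⟨e, hec, hed⟩ := ZMod.exists_ne_and_ne c d
    have hcde : insert e {c, d} = univ :=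
      ZMod.eq_univ_of_pairwise_ne_mem hdc.symm hed.symm hec.symm (by simp) (by simp) (by simp)
    rw [← comp_perm_of_pairwise_ne hm (fun v => setValue g top (insert v {c, d})) hdc.symm
      hed.symm hec.symm]
    simp [hcde, setValue_univ, hmin]
  · simp [setValue_univ, hmin]

theorem minority_setValue_insert_majority {m M : ZMod 3 → ZMod 3 → ZMod 3 → ZMod 3}
    (hm : ∀ x y z, m x y z = m y x z ∧ m x y z = m x z y) (hmin : ∀ x y, m x x y = y)
    (hM : ∀ x y z, M x y z = M y x z ∧ M x y z = M x z y) (hmaj : ∀ x y, M x x y = x) {c : ZMod 3}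
    (hMc : ∀ x y z, x ≠ y → y ≠ z → x ≠ z → M x y z = c)
    {g : ZMod 3 → ZMod 3 → ZMod 3} (hg : ∀ a b, g a b = g b a) {top : ZMod 3}
    (htop : m (g 0 c) (g 1 c) (g 2 c) = top) (R : Finset (ZMod 3)) (a₀ a₁ a₂ : ZMod 3) :
    m (setValue g top (insert a₀ (insert (M a₀ a₁ a₂) R)))
        (setValue g top (insert a₁ (insert (M a₀ a₁ a₂) R)))
        (setValue g top (insert a₂ (insert (M a₀ a₁ a₂) R))) =
      setValue g top (insert a₀ (insert a₁ (insert a₂ R))) := by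
  by_cases h : a₀ = a₁ ∨ a₁ = a₂ ∨ a₀ = a₂
  · exact minority_insert_majority_of_not_pairwise_ne hm hmin hM hmaj _ R h
  push Not at h
  obtain ⟨h₀₁, h₁₂, h₀₂⟩ := h
  have hfull : insert a₀ (insert a₁ (insert a₂ R)) = univ :=
    ZMod.eq_univ_of_pairwise_ne_mem h₀₁ h₁₂ h₀₂ (by simp) (by simp) (by simp)
  rw [hMc _ _ _ h₀₁ h₁₂ h₀₂, hfull, setValue_univ,
    comp_perm_of_pairwise_ne hm (fun v => setValue g top (insert v (insert c R))) h₀₁ h₁₂ h₀₂]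
  exact minority_setValue_insert hm hmin hg htop (mem_insert_self c R)

theorem eq_setValue_image {c : ZMod 3} {m M : ZMod 3 → ZMod 3 → ZMod 3 → ZMod 3}
    (hm : ∀ x y z, m x y z = m y x z ∧ m x y z = m x z y) (hmin : ∀ x y, m x x y = y)
    (hM : ∀ x y z, M x y z = M y x z ∧ M x y z = M x z y) (hmaj : ∀ x y, M x x y = x)
    (hMc : ∀ x y z, x ≠ y → y ≠ z → x ≠ z → M x y z = c)
    {s : (k : ℕ) → (Fin (k + 2) → ZMod 3) → ZMod 3} (hs2comm : ∀ a b, s 0 ![a, b] = s 0 ![b, a])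
    (hrec : ∀ (k : ℕ) (x : Fin (k + 3) → ZMod 3),
      s (k + 1) x = m (s k (shiftTuple M x (x 0))) (s k (shiftTuple M x (x 1)))
        (s k (shiftTuple M x (x 2))))
    (k : ℕ) (x : Fin (k + 2) → ZMod 3) :
    s k x = setValue (fun a b => s 0 ![a, b]) (m (s 0 ![0, c]) (s 0 ![1, c]) (s 0 ![2, c]))
      (univ.image x) := by
  induction k with
  | zero =>
    have hx : x = ![x 0, x 1] := by
      ext i
      fin_cases i <;> rfl
    have himage : univ.image x = {x 0, x 1} := by
      ext v
      simp [Fin.exists_fin_two, eq_comm]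
    rw [himage, setValue_pair hs2comm, ← hx]
  | succ k ih =>
    rw [hrec, ih, ih, ih, image_shiftTuple, image_shiftTuple, image_shiftTuple,
      image_eq_insert_insert_insert]
    exact minority_setValue_insert_majority hm hmin hM hmaj hMc hs2comm rfl _ _ _ _

theorem sn_totally_symmetric_general (c : ZMod 3)
    (m Mc : ZMod 3 → ZMod 3 → ZMod 3 → ZMod 3)
    (hmsym : ∀ x y z, m x y z = m y x z ∧ m x y z = m x z y)
    (hmmin : ∀ x y, m x x y = y)
    (hMsym : ∀ x y z, Mc x y z = Mc y x z ∧ Mc x y z = Mc x z y)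
    (hMmaj : ∀ x y, Mc x x y = x)
    (hMc : ∀ x y z, x ≠ y → y ≠ z → x ≠ z → Mc x y z = c)
    (s : (k : ℕ) → (Fin (k + 2) → ZMod 3) → ZMod 3)
    (hs2comm : ∀ a b, s 0 ![a, b] = s 0 ![b, a])
    (hrec : ∀ (k : ℕ) (x : Fin (k + 3) → ZMod 3),
      s (k + 1) x = m (s k (shiftTuple Mc x (x 0)))
                      (s k (shiftTuple Mc x (x 1)))
                      (s k (shiftTuple Mc x (x 2)))) :
    (∀ (k : ℕ) (x : Fin (k + 2) → ZMod 3) (a b : ZMod 3), a ≠ b →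
      (∀ i, x i = a ∨ x i = b) → (∃ i, x i = a) → (∃ i, x i = b) →
      s k x = s 0 ![a, b]) ∧
    (∀ (k : ℕ) (x : Fin (k + 2) → ZMod 3),
      (∀ v : ZMod 3, ∃ i, x i = v) →
      s k x = m (s 0 ![0, c]) (s 0 ![1, c]) (s 0 ![2, c])) ∧
    (∀ (k : ℕ) (x y : Fin (k + 2) → ZMod 3),
      (∀ v : ZMod 3, (∃ i, x i = v) ↔ (∃ j, y j = v)) → s k x = s k y) := by
  have hs := eq_setValue_image hmsym hmmin hMsym hMmaj hMc hs2comm hrec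
  refine ⟨fun k x a b _ hx ha hb => ?_, fun k x hx => ?_, fun k x y hxy => ?_⟩
  · have himage : univ.image x = {a, b} := by
      ext v
      simp only [mem_image, mem_univ, true_and, mem_insert, mem_singleton]
      exact ⟨fun ⟨i, hi⟩ => hi ▸ hx i, by rintro (rfl | rfl) <;> assumption⟩
    rw [hs k x, himage, setValue_pair hs2comm]
  · have himage : univ.image x = univ := eq_univ_of_forall fun v => by simpa using hx v
    rw [hs k x, himage, setValue_univ]
  · have himage : univ.image x = univ.image y := by
      ext v
      simpa using hxy v
    rw [hs k x, hs k y, himage]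

/-- For the family `sₙ` (where `s (k)` has arity `k+2`) defined recursively from a
commutative idempotent binary operation `s 0`, a symmetric minority `m` with
constant `c` and a symmetric majority `Mc` with constant `c`:
(i) on tuples with value set `{a,b}` it returns `s 0 (a,b)`;
(ii) on tuples with value set `{0,1,2}` it returns `m (s₂(0,c), s₂(1,c), s₂(2,c))`;
in particular each `sₙ` is totally symmetric. -/
theorem sn_totally_symmetric (c : ZMod 3)
    (m Mc : ZMod 3 → ZMod 3 → ZMod 3 → ZMod 3)
    (hmsym : ∀ x y z, m x y z = m y x z ∧ m x y z = m x z y)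
    (hmmin : ∀ x y, m x x y = y)
    (hmc : ∀ x y z, x ≠ y → y ≠ z → x ≠ z → m x y z = c)
    (hMsym : ∀ x y z, Mc x y z = Mc y x z ∧ Mc x y z = Mc x z y)
    (hMmaj : ∀ x y, Mc x x y = x)
    (hMc : ∀ x y z, x ≠ y → y ≠ z → x ≠ z → Mc x y z = c)
    (s : (k : ℕ) → (Fin (k + 2) → ZMod 3) → ZMod 3)
    (hs2comm : ∀ a b, s 0 ![a, b] = s 0 ![b, a])
    (hs2id : ∀ a, s 0 ![a, a] = a)
    (hrec : ∀ (k : ℕ) (x : Fin (k + 3) → ZMod 3),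
      s (k + 1) x = m (s k (shiftTuple Mc x (x 0)))
                      (s k (shiftTuple Mc x (x 1)))
                      (s k (shiftTuple Mc x (x 2)))) :
    (∀ (k : ℕ) (x : Fin (k + 2) → ZMod 3) (a b : ZMod 3), a ≠ b →
      (∀ i, x i = a ∨ x i = b) → (∃ i, x i = a) → (∃ i, x i = b) →
      s k x = s 0 ![a, b]) ∧
    (∀ (k : ℕ) (x : Fin (k + 2) → ZMod 3),
      (∀ v : ZMod 3, ∃ i, x i = v) →
      s k x = m (s 0 ![0, c]) (s 0 ![1, c]) (s 0 ![2, c])) ∧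
    (∀ (k : ℕ) (x y : Fin (k + 2) → ZMod 3),
      (∀ v : ZMod 3, (∃ i, x i = v) ↔ (∃ j, y j = v)) → s k x = s k y) :=
  sn_totally_symmetric_general c m Mc hmsym hmmin hMsym hMmaj hMc s hs2comm hrec
end

section
/- Identifying three variables of a generalized minority of odd arity n ≥ 5 yields a generalized minority of arity n−2. Precisely, if f : A^n → A is invariant under all argument permutations and satisfies f(x,x,x_3,...,x_n) = f(y,y,x_3,...,x_n), then g(x_1,...,x_{n-2}) := f(x_1,x_1,x_1,x_2,...,x_{n-2}) is invariant under all argument permutations and satisfies g(x,x,x_3,...,x_{n-2}) = g(y,y,x_3,...,x_{n-2}). -/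
/-!
A symmetric `f` depends only on the multiset of its arguments, and the minority law lets one
replace a repeated pair `a, a` in that multiset by any other pair `b, b`. Collapsing the first
three variables of `f` gives the multiset `{x₀, x₀} + {x₀, …, x_{n-1}}`, whose extra pair
`x₀, x₀` may thus be replaced by a fixed pair `c, c`; so the collapsed operation depends only on
the multiset `{x₀, …, x_{n-1}}`, i.e. it is symmetric. Its own minority law is two applications
of the law of `f`: `{a, a, a, a} + R` becomes `{b, b, a, a} + R` and then `{b, b, b, b} + R`.
-/

open List in
theorem exists_perm_comp_eq_of_perm_ofFn {A : Type*} {m : ℕ} {x y : Fin m → A}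
    (h : ofFn x ~ ofFn y) : ∃ σ : Equiv.Perm (Fin m), y ∘ σ = x := by
  classical
  have hcard (c : A) : Fintype.card {i // x i = c} = Fintype.card {i // y i = c} := by
    have := congrArg (Multiset.count c) (Multiset.coe_eq_coe.2 h)
    rw [← Fin.univ_val_map, ← Fin.univ_val_map, Multiset.count_map, Multiset.count_map] at this
    simpa [Fintype.card_subtype, Finset.card_def, Finset.filter_val, eq_comm] using this
  exact ⟨Equiv.ofFiberEquiv fun c => Fintype.equivOfCardEq (hcard c),
    funext (Equiv.ofFiberEquiv_map _)⟩

open List in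
theorem apply_eq_of_perm_ofFn {A B : Type*} {m : ℕ} {f : (Fin m → A) → B}
    (hperm : ∀ (σ : Equiv.Perm (Fin m)) (x : Fin m → A), f (x ∘ σ) = f x)
    {x y : Fin m → A} (h : ofFn x ~ ofFn y) : f x = f y := by
  obtain ⟨σ, rfl⟩ := exists_perm_comp_eq_of_perm_ofFn h
  exact hperm σ y

theorem Fin.update_update_zero_one_eq_cons_cons {A : Type*} {k : ℕ} (x : Fin (k + 2) → A)
    (c : A) :
    Function.update (Function.update x 0 c) 1 c =
      Fin.cons c (Fin.cons c (Fin.tail (Fin.tail x))) := by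
  ext i
  refine Fin.cases ?_ (Fin.cases ?_ fun j => ?_) i <;> simp [Fin.tail, Fin.ext_iff]

theorem apply_cons_cons_eq {A B : Type*} {k : ℕ} {f : (Fin (k + 2) → A) → B}
    (hgm : ∀ (x : Fin (k + 2) → A) (a b : A),
      f (Function.update (Function.update x 0 a) 1 a) =
        f (Function.update (Function.update x 0 b) 1 b))
    (t : Fin k → A) (a b : A) :
    f (Fin.cons a (Fin.cons a t)) = f (Fin.cons b (Fin.cons b t)) := by
  have h := hgm (Fin.cons a (Fin.cons a t)) a b
  rwa [Fin.update_update_zero_one_eq_cons_cons, Fin.update_update_zero_one_eq_cons_cons,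
    Fin.tail_cons, Fin.tail_cons] at h

theorem comp_sub_two_eq_cons_cons {A : Type*} {n : ℕ} (hn : 0 < n) (x : Fin n → A) :
    (fun i : Fin (n + 2) => x ⟨(i : ℕ) - 2, by omega⟩) =
      Fin.cons (x ⟨0, hn⟩) (Fin.cons (x ⟨0, hn⟩) x) := by
  ext i
  refine Fin.cases ?_ (Fin.cases ?_ fun j => ?_) i <;> simp

/-- Identifying three variables of a generalized minority of odd arity `n+2 ≥ 5`
yields a generalized minority of arity `n`. -/
theorem identify_generalized_minority (A : Type*) (n : ℕ) (hn : 3 ≤ n)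
    (f : (Fin (n + 2) → A) → A)
    (hperm : ∀ (σ : Equiv.Perm (Fin (n + 2))) (x : Fin (n + 2) → A), f (x ∘ σ) = f x)
    (hgm : ∀ (x : Fin (n + 2) → A) (a b : A),
      f (Function.update (Function.update x 0 a) 1 a) =
        f (Function.update (Function.update x 0 b) 1 b)) :
    (∀ (σ : Equiv.Perm (Fin n)) (x : Fin n → A),
      f (fun i => (x ∘ σ) ⟨(i : ℕ) - 2, by have := i.isLt; omega⟩) =
        f (fun i => x ⟨(i : ℕ) - 2, by have := i.isLt; omega⟩)) ∧
    (∀ (x : Fin n → A) (a b : A),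
      f (fun i => (Function.update (Function.update x ⟨0, by omega⟩ a) ⟨1, by omega⟩ a)
          ⟨(i : ℕ) - 2, by have := i.isLt; omega⟩) =
        f (fun i => (Function.update (Function.update x ⟨0, by omega⟩ b) ⟨1, by omega⟩ b)
          ⟨(i : ℕ) - 2, by have := i.isLt; omega⟩)) := by
  have hn0 : 0 < n := by omega
  constructor
  · intro σ x
    rw [comp_sub_two_eq_cons_cons hn0, comp_sub_two_eq_cons_cons hn0,
      apply_cons_cons_eq hgm _ _ (x ⟨0, hn0⟩)]
    refine apply_eq_of_perm_ofFn hperm ?_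
    simpa only [List.ofFn_cons] using ((σ.ofFn_comp_perm x).cons _).cons _
  · obtain ⟨k, rfl⟩ : ∃ k, n = k + 2 := ⟨n - 2, by omega⟩
    intro x a b
    rw [comp_sub_two_eq_cons_cons hn0, comp_sub_two_eq_cons_cons hn0, Fin.mk_zero, Fin.mk_one,
      Fin.update_update_zero_one_eq_cons_cons, Fin.update_update_zero_one_eq_cons_cons,
      Fin.cons_zero, Fin.cons_zero]
    set t := Fin.tail (Fin.tail x)
    calc f (Fin.cons a (Fin.cons a (Fin.cons a (Fin.cons a t))))
        = f (Fin.cons b (Fin.cons b (Fin.cons a (Fin.cons a t)))) := apply_cons_cons_eq hgm _ a b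
      _ = f (Fin.cons a (Fin.cons a (Fin.cons b (Fin.cons b t)))) :=
        apply_eq_of_perm_ofFn hperm (by
          simp only [List.ofFn_cons]
          exact (List.perm_append_comm (l₁ := [b, b]) (l₂ := [a, a])).append_right _)
      _ = f (Fin.cons b (Fin.cons b (Fin.cons b (Fin.cons b t)))) := apply_cons_cons_eq hgm _ a b
end
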